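/- arXiv:1704.04493 — 3 statements merged into one kernel-verified Lean document; each statement's English description precedes it below -/
import Mathlib

section
/- Let X be a well-ordered set. Every nonempty word w ∈ X* admits a unique factorization w = u₁u₂⋯uₙ where each uᵢ is an associative Lyndon-Shirshov word and u₁ ≤_{lex} u₂ ≤_{lex} ⋯ ≤_{lex} uₙ. -/
/-- The lexicographic order of the paper: the empty word is greater than any
nonempty word; otherwise compare letterwise.  `lexGT u v` means `u >_lex v`. -/
def lexGT {X : Type*} [LinearOrder X] : List X → List X → Prop
  | [], [] => False
  | [], _ :: _ => True
  | _ :: _, [] => False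
  | x :: u, y :: v => y < x ∨ (x = y ∧ lexGT u v)

/-- Associative Lyndon-Shirshov word: a nonempty word `w` such that
`w >_lex v ++ u` for every factorization `w = u ++ v` into nonempty words. -/
def ALSW {X : Type*} [LinearOrder X] (w : List X) : Prop :=
  w ≠ [] ∧ ∀ u v : List X, u ≠ [] → v ≠ [] → w = u ++ v → lexGT w (v ++ u)

section CFL

variable {X : Type*} [LinearOrder X]

@[simp] lemma lexGT_cons_cons (x y : X) (u v : List X) :
    lexGT (x :: u) (y :: v) ↔ y < x ∨ (x = y ∧ lexGT u v) := Iff.rfl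

lemma not_lexGT_nil : ∀ (a : List X), ¬ lexGT a []
  | [] => id
  | _ :: _ => id

lemma lexGT_irrefl : ∀ a : List X, ¬ lexGT a a
  | [] => id
  | x :: u => by simp [lexGT_irrefl u]

lemma lexGT_trans : ∀ (a b c : List X), lexGT a b → lexGT b c → lexGT a c
  | a, b, [] => fun _ h2 => absurd h2 (not_lexGT_nil b)
  | [], b, _ :: _ => fun _ _ => trivial
  | _ :: _, [], _ :: _ => fun h1 _ => absurd h1 (not_lexGT_nil _)
  | x :: u, y :: v, z :: w => by
    rintro (h1 | ⟨rfl, h1⟩) (h2 | ⟨rfl, h2⟩)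
    · exact Or.inl (h2.trans h1)
    · exact Or.inl h1
    · exact Or.inl h2
    · exact Or.inr ⟨rfl, lexGT_trans u v w h1 h2⟩

lemma lexGT_tri : ∀ (a b : List X), a = b ∨ lexGT a b ∨ lexGT b a
  | [], [] => Or.inl rfl
  | [], _ :: _ => Or.inr (Or.inl trivial)
  | _ :: _, [] => Or.inr (Or.inr trivial)
  | x :: u, y :: v => by
    rcases lt_trichotomy x y with h | rfl | h
    · exact Or.inr (Or.inr (Or.inl h))
    · rcases lexGT_tri u v with rfl | h | h
      · exact Or.inl rfl
      · exact Or.inr (Or.inl (Or.inr ⟨rfl, h⟩))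
      · exact Or.inr (Or.inr (Or.inr ⟨rfl, h⟩))
    · exact Or.inr (Or.inl (Or.inl h))

/-- a proper prefix is `lexGT`-related to its extension. -/
lemma lexGT_self_append : ∀ (u v : List X), v ≠ [] → lexGT u (u ++ v)
  | [], [], h => absurd rfl h
  | [], _ :: _, _ => trivial
  | x :: u, v, h => Or.inr ⟨rfl, lexGT_self_append u v h⟩

lemma lexGT_append_right : ∀ (a b t : List X), lexGT a b → lexGT a (b ++ t)
  | _, [], _, h => absurd h (not_lexGT_nil _)
  | [], _ :: _, _, _ => trivial
  | x :: u, y :: v, t, h => by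
    rcases h with h | ⟨rfl, h⟩
    · exact Or.inl h
    · exact Or.inr ⟨rfl, lexGT_append_right u v t h⟩

lemma lexGT_append_left_iff : ∀ (u s t : List X), (lexGT (u ++ s) (u ++ t) ↔ lexGT s t)
  | [], s, t => Iff.rfl
  | x :: u, s, t => by simp [lexGT_append_left_iff u s t]

lemma lexGT_prefix_or_forall :
    ∀ (a b : List X), lexGT a b → a <+: b ∨ ∀ s t, lexGT (a ++ s) (b ++ t)
  | [], [], h => absurd h (not_lexGT_nil _)
  | [], _ :: _, _ => Or.inl List.nil_prefix
  | _ :: _, [], h => absurd h (not_lexGT_nil _)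
  | x :: u, y :: v, h => by
    rcases h with h | ⟨rfl, h⟩
    · exact Or.inr fun s t => Or.inl h
    · rcases lexGT_prefix_or_forall u v h with ⟨r, hr⟩ | hf
      · exact Or.inl ⟨r, by simp [← hr]⟩
      · exact Or.inr fun s t => Or.inr ⟨rfl, hf s t⟩

lemma lexGT_append_of_length_eq {a b : List X} (h : lexGT a b) (hl : a.length = b.length)
    (s t : List X) : lexGT (a ++ s) (b ++ t) := by
  rcases lexGT_prefix_or_forall a b h with hp | hf
  · exact absurd (hp.eq_of_length hl ▸ h) (lexGT_irrefl b)
  · exact hf s t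

lemma not_lexGT_trans {a b c : List X} (h1 : ¬ lexGT a b) (h2 : ¬ lexGT b c) :
    ¬ lexGT a c := by
  intro h
  rcases lexGT_tri a b with rfl | h' | h'
  · exact h2 h
  · exact h1 h'
  · exact h2 (lexGT_trans b a c h' h)

/-- Lyndon-Shirshov via proper suffixes. -/
def Lyn (w : List X) : Prop :=
  w ≠ [] ∧ ∀ u v : List X, u ≠ [] → v ≠ [] → w = u ++ v → lexGT w v

lemma ALSW.suffix_gt {w u v : List X} (h : ALSW w) (hu : u ≠ []) (hv : v ≠ [])
    (he : w = u ++ v) : lexGT w v := by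
  by_contra hlt
  rcases lexGT_tri w v with rfl | h1 | h1
  · have := congrArg List.length he
    simp at this
    exact hu this
  · exact hlt h1
  · rcases lexGT_prefix_or_forall v w h1 with ⟨t', ht'⟩ | hf
    · have hw2 : w = v ++ t' := ht'.symm
      have hlen : t'.length = u.length := by
        have := congrArg List.length he
        rw [hw2] at this
        simp at this
        omega
      have ht'ne : t' ≠ [] := by
        intro hh
        apply hu
        apply List.length_eq_zero_iff.mp
        rw [← hlen, hh]
        rfl
      have k1 : lexGT w (t' ++ v) := h.2 v t' hv ht'ne hw2
      have k2 : lexGT w (v ++ u) := h.2 u v hu hv he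
      rw [hw2] at k2
      have k3 : lexGT t' u := (lexGT_append_left_iff v t' u).mp k2
      have k4 : lexGT (t' ++ v) (u ++ v) := lexGT_append_of_length_eq k3 hlen v v
      rw [← he] at k4
      exact lexGT_irrefl w (lexGT_trans _ _ _ k1 k4)
    · have k5 := hf u []
      rw [List.append_nil] at k5
      exact lexGT_irrefl w (lexGT_trans _ _ _ (h.2 u v hu hv he) k5)

lemma ALSW_iff_Lyn {w : List X} : ALSW w ↔ Lyn w := by
  constructor
  · exact fun h => ⟨h.1, fun u v hu hv he => h.suffix_gt hu hv he⟩
  · rintro ⟨hne, h⟩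
    exact ⟨hne, fun u v hu hv he => lexGT_append_right _ _ _ (h u v hu hv he)⟩

lemma Lyn.gt_of_eq_append {w u v : List X} (h : Lyn w) (hu : u ≠ []) (hv : v ≠ [])
    (he : w = u ++ v) : lexGT w v := h.2 u v hu hv he

/-- key: if `u, v` Lyndon and `u <' v` (i.e. `lexGT u v`), then `uv <' v`. -/
lemma lyn_append_gt {u v : List X} (hu : Lyn u) (hv : Lyn v) (h : lexGT u v) :
    lexGT (u ++ v) v := by
  rcases lexGT_prefix_or_forall u v h with ⟨t', ht'⟩ | hf
  · have ht'ne : t' ≠ [] := by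
      rintro rfl
      rw [List.append_nil] at ht'
      exact lexGT_irrefl u (ht' ▸ h)
    have h2 : lexGT v t' := hv.gt_of_eq_append hu.1 ht'ne ht'.symm
    have h3 := (lexGT_append_left_iff u v t').mpr h2
    rwa [ht'] at h3
  · have := hf v []
    rwa [List.append_nil] at this

/-- merge лемма: `u <' v` Lyndon words concatenate to a Lyndon word. -/
lemma Lyn.merge {u v : List X} (hu : Lyn u) (hv : Lyn v) (h : lexGT u v) :
    Lyn (u ++ v) := by
  refine ⟨by simp [hu.1], ?_⟩
  intro x y hx hy he
  rcases List.append_eq_append_iff.mp he.symm with ⟨m, hm1, hm2⟩ | ⟨m, hm1, hm2⟩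
  · -- u = x ++ m, y = m ++ v
    rcases eq_or_ne m [] with rfl | hm
    · rw [List.append_nil] at hm1
      simp at hm2
      subst hm1; subst hm2
      exact lyn_append_gt hu hv h
    · have h1 : lexGT u m := hu.gt_of_eq_append hx hm hm1
      rcases lexGT_prefix_or_forall u m h1 with hp | hf
      · exfalso
        have hle := hp.length_le
        have h2 := congrArg List.length hm1
        simp at h2
        have hx1 : 0 < x.length := List.length_pos_iff.mpr hx
        omega
      · rw [hm2]
        exact hf v v
  · -- x = u ++ m, v = m ++ y
    rcases eq_or_ne m [] with rfl | hm
    · rw [List.append_nil] at hm1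
      simp at hm2
      subst hm1; subst hm2
      exact lyn_append_gt hu hv h
    · have h1 : lexGT v y := hv.gt_of_eq_append hm hy hm2
      exact lexGT_trans _ _ _ (lyn_append_gt hu hv h) h1

/-- Rearranging a list of Lyndon factors into a nonincreasing chain. -/
lemma exists_chain : ∀ (n : ℕ) (l : List (List X)), l.length ≤ n → l ≠ [] →
    (∀ u ∈ l, Lyn u) →
    ∃ l' : List (List X), l'.flatten = l.flatten ∧ l' ≠ [] ∧ (∀ u ∈ l', Lyn u) ∧
      l'.Chain' (fun a b => ¬ lexGT a b) ∧ l'.length ≤ l.length := by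
  intro n
  induction n with
  | zero => intro l hl hne _; interval_cases hlen : l.length <;> simp_all
  | succ n ih =>
    intro l hl hne hlyn
    match l with
    | [] => exact absurd rfl hne
    | [a] => exact ⟨[a], rfl, by simp, hlyn, List.isChain_singleton a, le_refl _⟩
    | a :: b :: t =>
      obtain ⟨l', hfl, hne', hlyn', hch', hlen'⟩ :=
        ih (b :: t) (by simpa using hl) (by simp) (fun u hu => hlyn u (by simp [hu]))
      match l', hne' with
      | h :: t', _ =>
        by_cases hab : lexGT a h
        · have hah : Lyn (a ++ h) :=
            Lyn.merge (hlyn a (by simp)) (hlyn' h (by simp)) hab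
          obtain ⟨l'', h1, h2, h3, h4, h5⟩ := ih ((a ++ h) :: t')
            (by simp at hlen' hl ⊢; omega) (by simp)
            (by rintro u hu
                rcases List.mem_cons.mp hu with rfl | hu
                · exact hah
                · exact hlyn' u (by simp [hu]))
          refine ⟨l'', ?_, h2, h3, h4, by simp at h5 hlen' ⊢; omega⟩
          rw [h1]
          simp only [List.flatten_cons] at hfl ⊢
          rw [List.append_assoc, hfl]
        · refine ⟨a :: h :: t', ?_, by simp, ?_, ?_, by simp at hlen' ⊢; omega⟩
          · simp only [List.flatten_cons] at hfl ⊢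
            rw [hfl]
          · rintro u hu
            rcases List.mem_cons.mp hu with rfl | hu
            · exact hlyn u (by simp)
            · exact hlyn' u hu
          · exact List.isChain_cons_cons.mpr ⟨hab, hch'⟩

lemma flatten_map_singleton : ∀ (w : List X), (w.map fun x => [x]).flatten = w
  | [] => rfl
  | x :: w => by simp [flatten_map_singleton w]

lemma lyn_singleton (x : X) : Lyn [x] := by
  refine ⟨by simp, ?_⟩
  intro u v hu hv he
  exfalso
  have := congrArg List.length he
  simp at this
  have h1 : 1 ≤ u.length := List.length_pos_iff.mpr hu
  have h2 : 1 ≤ v.length := List.length_pos_iff.mpr hv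
  omega

/-- decompose a nonempty prefix of a flatten. -/
lemma prefix_flatten_decomp : ∀ (t : List (List X)), (∀ u ∈ t, u ≠ []) →
    ∀ c : List X, c ≠ [] → c <+: t.flatten →
    ∃ t₁ v p t₂, t = t₁ ++ v :: t₂ ∧ c = t₁.flatten ++ p ∧ p ≠ [] ∧ p <+: v := by
  intro t
  induction t with
  | nil =>
    intro _ c hc hp
    simp at hp
    exact absurd hp hc
  | cons v t' ih =>
    intro hne c hc hp
    simp only [List.flatten_cons] at hp
    by_cases hlen : c.length ≤ v.length
    · have hcv : c <+: v :=
        List.prefix_of_prefix_length_le hp (List.prefix_append v t'.flatten) hlen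
      exact ⟨[], v, c, t', rfl, by simp, hc, hcv⟩
    · obtain ⟨r, hr⟩ := hp
      push_neg at hlen
      -- v is a prefix of c
      have hvc : v <+: c :=
        List.prefix_of_prefix_length_le (List.prefix_append v t'.flatten)
          ⟨r, hr⟩ (le_of_lt hlen)
      obtain ⟨c', rfl⟩ := hvc
      have hc' : c' ≠ [] := by
        rintro rfl
        simp at hlen
      have hc'p : c' <+: t'.flatten := by
        rw [List.append_assoc] at hr
        exact ⟨r, List.append_cancel_left hr⟩
      obtain ⟨t₁, w, p, t₂, ht, hcp, hpne, hpw⟩ :=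
        ih (fun u hu => hne u (by simp [hu])) c' hc' hc'p
      exact ⟨v :: t₁, w, p, t₂, by simp [ht], by simp [hcp], hpne, hpw⟩

lemma chain'_rel_head {R : List X → List X → Prop}
    (hR : ∀ {a b c}, R a b → R b c → R a c) :
    ∀ {t : List (List X)} {b v : List X}, List.Chain' R (b :: t) → v ∈ t → R b v := by
  intro t
  induction t with
  | nil => intro b v _ hv; simp at hv
  | cons x t' ih =>
    intro b v hch hv
    have h1 : R b x := (List.isChain_cons_cons.mp hch).1
    rcases List.mem_cons.mp hv with rfl | hv
    · exact h1
    · exact hR h1 (ih (List.isChain_cons_cons.mp hch).2 hv)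

/-- The head of a Lyndon chain factorization is determined. -/
lemma head_eq {a b : List X} {s t : List (List X)}
    (ha : Lyn a) (hb : Lyn b) (hbt : ∀ u ∈ t, Lyn u)
    (hcb : List.Chain' (fun a b => ¬ lexGT a b) (b :: t))
    (he : a ++ s.flatten = b ++ t.flatten) (hlen : b.length ≤ a.length) : a = b := by
  have hba : b <+: a :=
    List.prefix_of_prefix_length_le ⟨t.flatten, he.symm⟩ ⟨s.flatten, rfl⟩ hlen
  obtain ⟨c, rfl⟩ := hba
  rcases eq_or_ne c [] with rfl | hc
  · simp
  exfalso
  have hft : t.flatten = c ++ s.flatten := by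
    rw [List.append_assoc] at he
    exact (List.append_cancel_left he).symm
  obtain ⟨t₁, v, p, t₂, ht, hcp, hpne, hpv⟩ :=
    prefix_flatten_decomp t (fun u hu => (hbt u hu).1) c hc ⟨s.flatten, hft.symm⟩
  -- lexGT (b ++ c) p
  have h1 : lexGT (b ++ c) p := by
    apply ha.gt_of_eq_append (u := b ++ t₁.flatten) _ hpne
    · rw [hcp, List.append_assoc]
    · simp [hb.1]
  -- p ≤' v  :  p = v ∨ lexGT p v
  have h2 : p = v ∨ lexGT p v := by
    obtain ⟨q, hq⟩ := hpv
    rcases eq_or_ne q [] with rfl | hqne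
    · left; rw [← hq, List.append_nil]
    · right; rw [← hq]; exact lexGT_self_append p q hqne
  -- ¬ lexGT b v
  have h3 : ¬ lexGT b v :=
    chain'_rel_head (R := fun a b => ¬ lexGT a b) (fun h1 h2 => not_lexGT_trans h1 h2) hcb
      (show v ∈ t by
        rw [ht]; exact List.mem_append_right _ List.mem_cons_self)
  -- lexGT b (b ++ c)
  have h4 : lexGT b (b ++ c) := lexGT_self_append b c hc
  have h5 : lexGT (b ++ c) v := by
    rcases h2 with rfl | h2
    · exact h1
    · exact lexGT_trans _ _ _ h1 h2
  have h6 : lexGT b v := lexGT_trans _ _ _ h4 h5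
  exact h3 h6

lemma unique_fact : ∀ (l₁ l₂ : List (List X)),
    (∀ u ∈ l₁, Lyn u) → List.Chain' (fun a b => ¬ lexGT a b) l₁ →
    (∀ u ∈ l₂, Lyn u) → List.Chain' (fun a b => ¬ lexGT a b) l₂ →
    l₁.flatten = l₂.flatten → l₁ = l₂ := by
  intro l₁
  induction l₁ with
  | nil =>
    intro l₂ _ _ h2 _ hf
    rcases l₂ with _ | ⟨b, t⟩
    · rfl
    · exfalso
      simp only [List.flatten_nil, List.flatten_cons] at hf
      exact (h2 b (by simp)).1 (List.append_eq_nil_iff.mp hf.symm).1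
  | cons a s ih =>
    intro l₂ h1 hc1 h2 hc2 hf
    rcases l₂ with _ | ⟨b, t⟩
    · exfalso
      simp only [List.flatten_nil, List.flatten_cons] at hf
      exact (h1 a (by simp)).1 (List.append_eq_nil_iff.mp hf).1
    · simp only [List.flatten_cons] at hf
      have hab : a = b := by
        rcases le_total b.length a.length with h | h
        · exact head_eq (h1 a (by simp)) (h2 b (by simp))
            (fun u hu => h2 u (by simp [hu])) hc2 hf h
        · exact (head_eq (h2 b (by simp)) (h1 a (by simp))
            (fun u hu => h1 u (by simp [hu])) hc1 hf.symm h).symm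
      subst hab
      have hst : s.flatten = t.flatten := List.append_cancel_left hf
      have : s = t := ih t (fun u hu => h1 u (by simp [hu])) hc1.tail
        (fun u hu => h2 u (by simp [hu])) hc2.tail hst
      rw [this]

end CFL

/-- Chen-Fox-Lyndon factorization: every nonempty word factors
uniquely as a non-decreasing product of Lyndon-Shirshov words. -/
theorem chen_fox_lyndon_factorization
    (X : Type*) [LinearOrder X] [WellFoundedLT X] (w : List X) (hw : w ≠ []) :
    ∃! l : List (List X),
      l.flatten = w ∧ l ≠ [] ∧ (∀ u ∈ l, ALSW u) ∧
        l.Chain' (fun a b => ¬ lexGT a b) := by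
  obtain ⟨l, hfl, hne, hlyn, hch, _⟩ :=
    exists_chain (w.map fun x => [x]).length (w.map fun x => [x]) le_rfl
      (by simpa using hw)
      (by
        intro u hu
        simp only [List.mem_map] at hu
        obtain ⟨x, -, rfl⟩ := hu
        exact lyn_singleton x)
  rw [flatten_map_singleton] at hfl
  refine ⟨l, ⟨hfl, hne, fun u hu => ALSW_iff_Lyn.mpr (hlyn u hu), hch⟩, ?_⟩
  rintro l₂ ⟨hfl₂, _, hlyn₂, hch₂⟩
  exact unique_fact l₂ l (fun u hu => ALSW_iff_Lyn.mp (hlyn₂ u hu)) hch₂ hlyn hch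
    (by rw [hfl, hfl₂])
end

section
/- The set of nonassociative Lyndon-Shirshov words NLSW(X) = {[u] : u ∈ ALSW(X)} is linearly independent in the free associative algebra k⟨X⟩, where the bracket is [a,b] = ab − ba. -/
/-- `u` is deg-lex smaller than `v`: shorter, or of the same length and
lexicographically smaller. -/
def degLexLT {X : Type*} [LinearOrder X] (u v : List X) : Prop :=
  u.length < v.length ∨ (u.length = v.length ∧ List.Lex (· < ·) u v)

/-- The Shirshov standard bracketing, as a relation between an associative
Lyndon-Shirshov word and the corresponding element of the free associative
algebra `k⟨X⟩ = MonoidAlgebra k (FreeMonoid X)`: a single letter brackets to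
itself, and a word of length ≥ 2 brackets as `[[v],[w]]` where `w` is the
longest proper Lyndon-Shirshov suffix. -/
inductive SB (k : Type*) [Field k] (X : Type*) [LinearOrder X] :
    List X → MonoidAlgebra k (FreeMonoid X) → Prop
  | letter (x : X) : SB k X [x] (MonoidAlgebra.single (FreeMonoid.ofList [x]) 1)
  | node (v w : List X) (f g : MonoidAlgebra k (FreeMonoid X)) :
      v ≠ [] → w ≠ [] → ALSW w →
      (∀ v' w' : List X, v ++ w = v' ++ w' → v' ≠ [] → w' ≠ [] → ALSW w' →
        w'.length ≤ w.length) →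
      SB k X v f → SB k X w g → SB k X (v ++ w) (f * g - g * f)



section Aux

namespace LexGT
variable {X : Type*} [LinearOrder X]

@[simp] lemma nil_nil : ¬ lexGT ([] : List X) [] := by simp [lexGT]
@[simp] lemma nil_cons (y : X) (v : List X) : lexGT [] (y :: v) := by simp [lexGT]
@[simp] lemma cons_nil (x : X) (u : List X) : ¬ lexGT (x :: u) [] := by simp [lexGT]
@[simp] lemma cons_cons (x y : X) (u v : List X) :
    lexGT (x :: u) (y :: v) ↔ y < x ∨ (x = y ∧ lexGT u v) := Iff.rfl

lemma total : ∀ a b : List X, a = b ∨ lexGT a b ∨ lexGT b a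
  | [], [] => Or.inl rfl
  | [], _ :: _ => Or.inr (Or.inl (by simp))
  | _ :: _, [] => Or.inr (Or.inr (by simp))
  | x :: u, y :: v => by
    rcases lt_trichotomy x y with h | h | h
    · exact Or.inr (Or.inr (by simp [h]))
    · subst h
      rcases total u v with h | h | h
      · exact Or.inl (by rw [h])
      · exact Or.inr (Or.inl (by simp [h]))
      · exact Or.inr (Or.inr (by simp [h]))
    · exact Or.inr (Or.inl (by simp [h]))

lemma asymm : ∀ a b : List X, lexGT a b → ¬ lexGT b a
  | [], [], h => by simp at h
  | [], _ :: _, _ => by simp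
  | _ :: _, [], h => by simp at h
  | x :: u, y :: v, h => by
    simp only [cons_cons] at h ⊢
    rcases h with h | ⟨rfl, h⟩
    · rintro (h' | ⟨rfl, h'⟩)
      · exact lt_asymm h h'
      · exact lt_irrefl _ h
    · rintro (h' | ⟨-, h'⟩)
      · exact lt_irrefl _ h'
      · exact asymm u v h h'

lemma irrefl (a : List X) : ¬ lexGT a a := fun h => asymm a a h h

lemma trans : ∀ a b c : List X, lexGT a b → lexGT b c → lexGT a c
  | _, [], [], _, h2 => by simp at h2
  | [], [], _, h1, _ => by simp at h1
  | _ :: _, [], _, h1, _ => by simp at h1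
  | [], _ :: _, [], _, h2 => by simp at h2
  | [], _ :: _, _ :: _, _, _ => by simp
  | _ :: _, _ :: _, [], _, h2 => by simp at h2
  | x :: u, y :: v, z :: w, h1, h2 => by
    simp only [cons_cons] at h1 h2 ⊢
    rcases h1 with h1 | ⟨rfl, h1⟩ <;> rcases h2 with h2 | ⟨rfl, h2⟩
    · exact Or.inl (h2.trans h1)
    · exact Or.inl h1
    · exact Or.inl h2
    · exact Or.inr ⟨rfl, trans u v w h1 h2⟩

lemma prefix_gt : ∀ (a t : List X), t ≠ [] → lexGT a (a ++ t)
  | [], t, ht => by cases t <;> simp_all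
  | x :: u, t, ht => Or.inr ⟨rfl, prefix_gt u t ht⟩

/-- strip common prefix -/
lemma strip : ∀ (a b c : List X), lexGT (a ++ b) (a ++ c) ↔ lexGT b c
  | [], _, _ => Iff.rfl
  | x :: u, b, c => by simpa using strip u b c

/-- L1: decompose comparison of equal-length-prefix concatenations. -/
lemma append_iff : ∀ (a b c d : List X), a.length = b.length →
    (lexGT (a ++ c) (b ++ d) ↔ lexGT a b ∨ (a = b ∧ lexGT c d))
  | [], [], c, d, _ => by simp
  | x :: u, y :: v, c, d, h => by
    simp only [List.length_cons, Nat.succ.injEq] at h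
    simp only [List.cons_append, cons_cons, append_iff u v c d h]
    constructor
    · rintro (h' | ⟨rfl, h' | ⟨rfl, h'⟩⟩)
      · exact Or.inl (Or.inl h')
      · exact Or.inl (Or.inr ⟨rfl, h'⟩)
      · exact Or.inr ⟨rfl, h'⟩
    · rintro ((h' | ⟨rfl, h'⟩) | ⟨heq, h'⟩)
      · exact Or.inl h'
      · exact Or.inr ⟨rfl, Or.inl h'⟩
      · cases heq; exact Or.inr ⟨rfl, Or.inr ⟨rfl, h'⟩⟩

/-- L6: a strictly-bigger-by-letter comparison extends arbitrarily. -/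
lemma extend_of_le_length : ∀ (a b : List X), lexGT a b → b.length ≤ a.length →
    ∀ c d, lexGT (a ++ c) (b ++ d)
  | [], [], h, _, _, _ => by simp at h
  | [], _ :: _, _, hl, _, _ => by simp at hl
  | _ :: _, [], h, _, _, _ => by simp at h
  | x :: u, y :: v, h, hl, c, d => by
    simp only [cons_cons] at h
    simp only [List.length_cons, Nat.succ_le_succ_iff] at hl
    rcases h with h | ⟨rfl, h⟩
    · exact Or.inl h
    · exact Or.inr ⟨rfl, extend_of_le_length u v h hl c d⟩

/-- L4'': either the larger word is a proper prefix, or comparison extends. -/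
lemma prefix_or_extend : ∀ (a b : List X), lexGT a b →
    (∃ t, t ≠ [] ∧ b = a ++ t) ∨ ∀ c d, lexGT (a ++ c) (b ++ d)
  | [], [], h => by simp at h
  | [], y :: v, _ => Or.inl ⟨y :: v, by simp⟩
  | _ :: _, [], h => by simp at h
  | x :: u, y :: v, h => by
    simp only [cons_cons] at h
    rcases h with h | ⟨rfl, h⟩
    · exact Or.inr fun c d => Or.inl h
    · rcases prefix_or_extend u v h with ⟨t, ht, rfl⟩ | H
      · exact Or.inl ⟨t, ht, by simp⟩
      · exact Or.inr fun c d => Or.inr ⟨rfl, H c d⟩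

end LexGT


namespace LexGT
variable {X : Type*} [LinearOrder X]

/-- Lemma A: an ALSW is lexGT every proper nonempty suffix. -/
lemma alsw_gt_suffix {u p s : List X} (hu : ALSW u) (hps : u = p ++ s)
    (hp : p ≠ []) (hs : s ≠ []) : lexGT u s := by
  rcases total u s with rfl | h | h
  · exfalso
    have h1 := congrArg List.length hps
    have hp' : 0 < p.length := List.length_pos_iff.mpr hp
    simp only [List.length_append] at h1
    omega
  · exact h
  · exfalso
    rcases prefix_or_extend s u h with ⟨t, ht, hut⟩ | H
    · -- u = s ++ t : border case
      have h1 : lexGT u (s ++ p) := hu.2 p s hp hs hps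
      have h2 : lexGT u (t ++ s) := hu.2 s t hs ht hut
      have hlen : p.length = t.length := by
        have := congrArg List.length hps
        rw [hut] at this
        simp at this; omega
      rw [hut] at h1
      rw [strip] at h1  -- lexGT t p
      rw [hps] at h2
      rw [append_iff p t s s hlen] at h2
      rcases h2 with h2 | ⟨rfl, h2⟩
      · exact asymm _ _ h1 h2
      · exact irrefl _ h2
    · have h1 : lexGT u (s ++ p) := hu.2 p s hp hs hps
      have h2 : lexGT (s ++ p) (u ++ []) := H p []
      rw [List.append_nil] at h2
      exact asymm _ _ h1 h2

/-- Lemma B: suffix condition implies ALSW. -/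
lemma alsw_of_suffix_cond {u : List X} (hne : u ≠ [])
    (H : ∀ p s, p ≠ [] → s ≠ [] → u = p ++ s → lexGT u s) : ALSW u := by
  refine ⟨hne, fun p s hp hs hps => ?_⟩
  have h := H p s hp hs hps
  rcases prefix_or_extend u s h with ⟨t, ht, hst⟩ | H'
  · exfalso
    have h1 := congrArg List.length hps
    have h2 := congrArg List.length hst
    have hp' : 0 < p.length := List.length_pos_iff.mpr hp
    simp only [List.length_append] at h1 h2
    omega
  · have := H' [] p
    rwa [List.append_nil] at this

/-- Lemma C: merging two ALSWs. -/
lemma alsw_append {p q : List X} (hp : ALSW p) (hq : ALSW q) (h : lexGT p q) :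
    ALSW (p ++ q) := by
  have hpq_gt_q : lexGT (p ++ q) q := by
    rcases prefix_or_extend p q h with ⟨t, ht, rfl⟩ | H
    · rw [strip]
      exact alsw_gt_suffix hq rfl hp.1 ht
    · have := H q []
      rwa [List.append_nil] at this
  refine alsw_of_suffix_cond (by simp [hp.1]) fun r s hr hs hrs => ?_
  rcases le_or_gt p.length r.length with hl | hl
  · -- r = p ++ m, s suffix of q
    obtain ⟨m, rfl, hqm⟩ : ∃ m, r = p ++ m ∧ q = m ++ s := by
      have h1 : r.take p.length = p := by
        have := congrArg (List.take p.length) hrs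
        rw [List.take_append_of_le_length hl, List.take_left] at this
        exact this.symm
      refine ⟨r.drop p.length, ?_, ?_⟩
      · have h2 := List.take_append_drop p.length r
        rw [h1] at h2
        exact h2.symm
      have := congrArg (List.drop p.length) hrs
      rw [List.drop_left, List.drop_append_of_le_length hl] at this
      exact this
    rcases eq_or_ne m [] with rfl | hm
    · simp only [List.nil_append] at hqm; subst hqm; exact hpq_gt_q
    · exact trans _ _ _ hpq_gt_q (alsw_gt_suffix hq hqm hm hs)
  · -- p = r ++ m, s = m ++ q
    obtain ⟨m, hpm, hsm⟩ : ∃ m, p = r ++ m ∧ s = m ++ q := by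
      have h1 : p.take r.length = r := by
        have := congrArg (List.take r.length) hrs
        rw [List.take_left, List.take_append_of_le_length hl.le] at this
        exact this
      refine ⟨p.drop r.length, ?_, ?_⟩
      · have h2 := List.take_append_drop r.length p
        rw [h1] at h2
        exact h2.symm
      have := congrArg (List.drop r.length) hrs
      rw [List.drop_append_of_le_length hl.le, List.drop_left] at this
      exact this.symm
    have hm : m ≠ [] := by
      rintro rfl
      rw [List.append_nil] at hpm
      subst hpm; exact lt_irrefl _ hl
    have h2 : lexGT p m := alsw_gt_suffix hp hpm hr hm
    have hlen : m.length ≤ p.length := by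
      have := congrArg List.length hpm; simp at this; omega
    rw [hsm]
    exact extend_of_le_length p m h2 hlen q q

/-- the "not greater" relation used for Lyndon factorizations -/
def nGT {X : Type*} [LinearOrder X] (p q : List X) : Prop := ¬ lexGT p q

lemma nGT_trans {a b c : List X} (h1 : nGT a b) (h2 : nGT b c) : nGT a c := by
  intro h
  rcases total a b with rfl | h' | h'
  · exact h2 h
  · exact h1 h'
  · exact h2 (trans _ _ _ h' h)

instance : IsTrans (List X) nGT := ⟨fun _ _ _ => nGT_trans⟩

lemma alsw_singleton (x : X) : ALSW [x] := by
  refine ⟨by simp, fun u v hu hv h => ?_⟩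
  exfalso
  have := congrArg List.length h
  have hu' : 0 < u.length := List.length_pos_iff.mpr hu
  have hv' : 0 < v.length := List.length_pos_iff.mpr hv
  simp only [List.length_append, List.length_cons, List.length_nil] at this
  omega

lemma join_ne_nil {M : List (List X)} (hM : M ≠ []) (h : ∀ m ∈ M, m ≠ []) :
    M.flatten ≠ [] := by
  rcases M with _ | ⟨a, M⟩
  · exact absurd rfl hM
  · simp only [List.flatten_cons]
    have := h a (by simp)
    rcases a with _ | ⟨x, a⟩
    · exact absurd rfl this
    · simp

/-- An ALSW is not a ≤-chain product of two or more ALSWs. -/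
lemma not_alsw_join (p : List X) (M : List (List X)) (hM : M ≠ [])
    (hall : ∀ m ∈ p :: M, ALSW m) (hchain : List.Chain' nGT (p :: M)) :
    ¬ ALSW ((p :: M).flatten) := by
  intro hA
  set q := M.getLast hM with hq
  have hqM : q ∈ M := List.getLast_mem hM
  have hqA : ALSW q := hall q (by simp [hqM])
  have hpA : ALSW p := hall p (by simp)
  have hMne : ∀ m ∈ M, m ≠ [] := fun m hm => (hall m (by simp [hm])).1
  have hjoin_ne : M.flatten ≠ [] := join_ne_nil hM hMne
  have hj : (p :: M).flatten = p ++ M.flatten := by simp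
  have h1 : lexGT p ((p :: M).flatten) := by
    rw [hj]; exact prefix_gt p M.flatten hjoin_ne
  have hdec : M = M.dropLast ++ [q] := (List.dropLast_append_getLast hM).symm
  have h2 : lexGT ((p :: M).flatten) q := by
    have hje : (p :: M).flatten = (p ++ M.dropLast.flatten) ++ q := by
      rw [hj]
      conv_lhs => rw [hdec]
      simp [List.flatten_append]
    exact alsw_gt_suffix hA hje (by simp [hpA.1]) hqA.1
  have h3 : nGT p q := by
    have := (List.isChain_iff_pairwise.mp hchain)
    exact List.rel_of_pairwise_cons this hqM
  rcases total p q with rfl | h' | h'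
  · exact asymm _ _ h1 h2
  · exact h3 h'
  · exact irrefl _ (trans _ _ _ (trans _ _ _ h1 h2) h')

lemma chain'_or_split {α : Type*} (R : α → α → Prop) [DecidableRel R] :
    ∀ M : List α, List.Chain' R M ∨
      ∃ A p q B, M = A ++ p :: q :: B ∧ ¬ R p q
  | [] => Or.inl List.isChain_nil
  | [a] => Or.inl (List.isChain_singleton a)
  | a :: b :: t => by
    by_cases h : R a b
    · rcases chain'_or_split R (b :: t) with hc | ⟨A, p, q, B, hEq, hR⟩
      · exact Or.inl (List.isChain_cons_cons.mpr ⟨h, hc⟩)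
      · exact Or.inr ⟨a :: A, p, q, B, by rw [List.cons_append, hEq], hR⟩
    · exact Or.inr ⟨[], a, b, t, rfl, h⟩

lemma exists_chain_fact (M : List (List X)) (hM : ∀ m ∈ M, ALSW m) :
    ∃ M' : List (List X), (∀ m ∈ M', ALSW m) ∧ M'.flatten = M.flatten ∧
      List.Chain' nGT M' := by
  classical
  rcases chain'_or_split nGT M with hc | ⟨A, p, q, B, hEq, hR⟩
  · exact ⟨M, hM, rfl, hc⟩
  · have hGT : lexGT p q := not_not.mp hR
    have hpA : ALSW p := hM p (by simp [hEq])
    have hqA : ALSW q := hM q (by simp [hEq])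
    have hfused : ALSW (p ++ q) := alsw_append hpA hqA hGT
    have hlen : (A ++ (p ++ q) :: B).length < M.length := by
      rw [hEq]; simp
    obtain ⟨M', h1, h2, h3⟩ := exists_chain_fact (A ++ (p ++ q) :: B)
      (by
        intro m hm
        simp only [List.mem_append, List.mem_cons] at hm
        rcases hm with hm | rfl | hm
        · exact hM m (by simp [hEq, hm])
        · exact hfused
        · exact hM m (by simp [hEq, hm]))
    refine ⟨M', h1, ?_, h3⟩
    rw [h2, hEq]
    simp [List.flatten_append]
  termination_by M.length

/-- Main combinatorial lemma: left factor of the standard factorization is ALSW. -/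
lemma join_map_singleton' : ∀ v : List X, (v.map fun x => [x]).flatten = v
  | [] => rfl
  | x :: v => by simp [join_map_singleton' v]

lemma alsw_left {v w : List X} (hv : v ≠ []) (hw : w ≠ []) (hvw : ALSW (v ++ w))
    (hwA : ALSW w)
    (hmax : ∀ v' w', v ++ w = v' ++ w' → v' ≠ [] → w' ≠ [] → ALSW w' →
      w'.length ≤ w.length) : ALSW v := by
  obtain ⟨M, hall, hjoin, hchain⟩ :=
    exists_chain_fact (v.map fun x => [x])
      (by
        intro m hm
        simp only [List.mem_map] at hm
        obtain ⟨x, -, rfl⟩ := hm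
        exact alsw_singleton x)
  rw [join_map_singleton'] at hjoin
  have hMne : M ≠ [] := by
    rintro rfl
    exact hv (by simpa using hjoin.symm)
  set p := M.getLast hMne with hp
  have hpM : p ∈ M := List.getLast_mem hMne
  have hpA : ALSW p := hall p hpM
  have hdec : M = M.dropLast ++ [p] := (List.dropLast_append_getLast hMne).symm
  have hvdec : v = M.dropLast.flatten ++ p := by
    rw [← hjoin]
    conv_lhs => rw [hdec]
    simp [List.flatten_append]
  by_cases hA : M.dropLast = []
  · rw [hvdec, hA]
    simpa using hpA
  · exfalso
    have hAjoin : M.dropLast.flatten ≠ [] :=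
      join_ne_nil hA (fun m hm => (hall m (List.mem_of_mem_dropLast hm)).1)
    by_cases hpw : lexGT p w
    · have hfA : ALSW (p ++ w) := alsw_append hpA hwA hpw
      have := hmax M.dropLast.flatten (p ++ w)
        (by rw [hvdec]; simp) hAjoin (by simp [hpA.1]) hfA
      have hp' : 0 < p.length := List.length_pos_iff.mpr hpA.1
      simp only [List.length_append] at this
      omega
    · -- chain extends by w, contradiction with not_alsw_join
      rcases M with _ | ⟨m0, M'⟩
      · exact hMne rfl
      · have hchain2 : List.Chain' nGT ((m0 :: M') ++ [w]) := by
          refine List.isChain_append.mpr ?_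
          refine ⟨hchain, List.isChain_singleton w, ?_⟩
          intro x hx y hy
          simp only [List.head?_cons, Option.mem_def, Option.some.injEq] at hy
          subst hy
          have hx' : x = p := by
            have hgl := List.getLast?_eq_getLast (l := m0 :: M') hMne
            rw [hgl] at hx
            have h2 : (m0 :: M').getLast hMne = x := by simpa using hx
            rw [hp, ← h2]
          subst hx'
          exact hpw
        have hjoin2 : ((m0 :: M') ++ [w]).flatten = v ++ w := by
          simp [List.flatten_append, ← hjoin]
        have := not_alsw_join m0 (M' ++ [w]) (by simp)
          (by
            intro m hm
            simp only [List.mem_cons, List.mem_append, List.not_mem_nil, or_false] at hm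
            rcases hm with rfl | hm | rfl
            · exact hall m (by simp)
            · exact hall m (by simp [hm])
            · exact hwA)
          (by simpa using hchain2)
        apply this
        have : (m0 :: (M' ++ [w])).flatten = v ++ w := by simpa using hjoin2
        rw [this]
        exact hvw
end LexGT

namespace LexGT
variable {k : Type*} [Field k] {X : Type*} [LinearOrder X]

lemma sb_inv {u : List X} {f : MonoidAlgebra k (FreeMonoid X)}
    (h : SB k X u f) (hu : ALSW u) :
    f.coeff (FreeMonoid.ofList u) = 1 ∧
    ∀ z : FreeMonoid X, f.coeff z ≠ 0 →
      (FreeMonoid.toList z).length = u.length ∧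
      (FreeMonoid.toList z = u ∨ lexGT u (FreeMonoid.toList z)) := by
  classical
  induction h with
  | letter x =>
    constructor
    · simp [MonoidAlgebra.coeff_single]
    · intro z hz
      have hzx : FreeMonoid.ofList [x] = z := by
        by_contra hne
        exact hz (Finsupp.single_eq_of_ne' hne)
      subst hzx
      simp
  | node v w f g hv hw hwA hmax hsf hsg ihf ihg =>
    have hvw : ALSW (v ++ w) := hu
    have hvA : ALSW v := alsw_left hv hw hvw hwA hmax
    obtain ⟨hf1, hfS⟩ := ihf hvA
    obtain ⟨hg1, hgS⟩ := ihg hwA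
    -- membership decomposition for products
    have hdecomp : ∀ (f' g' : MonoidAlgebra k (FreeMonoid X)) (z : FreeMonoid X),
        (f' * g').coeff z ≠ 0 → ∃ a b : FreeMonoid X, f'.coeff a ≠ 0 ∧ g'.coeff b ≠ 0 ∧ z = a * b := by
      intro f' g' z hz
      have hmem := MonoidAlgebra.support_coeff_mul_subset f' g' (Finsupp.mem_support_iff.mpr hz)
      rw [Finset.mem_mul] at hmem
      obtain ⟨a, ha, b, hb, hab⟩ := hmem
      exact ⟨a, b, Finsupp.mem_support_iff.mp ha, Finsupp.mem_support_iff.mp hb, hab.symm⟩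
    have hwv : lexGT (v ++ w) (w ++ v) := hvw.2 v w hv hw rfl
    -- terms of f * g
    have key1 : ∀ z : FreeMonoid X, (f * g).coeff z ≠ 0 →
        (FreeMonoid.toList z).length = (v ++ w).length ∧
        (FreeMonoid.toList z = v ++ w ∨ lexGT (v ++ w) (FreeMonoid.toList z)) := by
      intro z hz
      obtain ⟨a, b, ha, hb, rfl⟩ := hdecomp f g z hz
      obtain ⟨hal, hac⟩ := hfS a ha
      obtain ⟨hbl, hbc⟩ := hgS b hb
      rw [FreeMonoid.toList_mul]
      constructor
      · simp [hal, hbl]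
      · rcases hac with hac | hac
        · rcases hbc with hbc | hbc
          · exact Or.inl (by rw [hac, hbc])
          · exact Or.inr ((append_iff v (FreeMonoid.toList a) w (FreeMonoid.toList b)
              hal.symm).mpr (Or.inr ⟨hac.symm, hbc⟩))
        · exact Or.inr ((append_iff v (FreeMonoid.toList a) w (FreeMonoid.toList b)
            hal.symm).mpr (Or.inl hac))
    -- terms of g * f are strictly smaller
    have key2 : ∀ z : FreeMonoid X, (g * f).coeff z ≠ 0 →
        (FreeMonoid.toList z).length = (v ++ w).length ∧
        lexGT (v ++ w) (FreeMonoid.toList z) := by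
      intro z hz
      obtain ⟨b, a, hb, ha, rfl⟩ := hdecomp g f z hz
      obtain ⟨hal, hac⟩ := hfS a ha
      obtain ⟨hbl, hbc⟩ := hgS b hb
      rw [FreeMonoid.toList_mul]
      constructor
      · simp [hal, hbl]; omega
      · have hle : FreeMonoid.toList b ++ FreeMonoid.toList a = w ++ v ∨
            lexGT (w ++ v) (FreeMonoid.toList b ++ FreeMonoid.toList a) := by
          rcases hbc with hbc | hbc
          · rcases hac with hac | hac
            · exact Or.inl (by rw [hac, hbc])
            · exact Or.inr ((append_iff w (FreeMonoid.toList b) v (FreeMonoid.toList a)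
                hbl.symm).mpr (Or.inr ⟨hbc.symm, hac⟩))
          · exact Or.inr ((append_iff w (FreeMonoid.toList b) v (FreeMonoid.toList a)
              hbl.symm).mpr (Or.inl hbc))
        rcases hle with hle | hle
        · rw [hle]; exact hwv
        · exact trans _ _ _ hwv hle
    have hgf0 : (g * f).coeff (FreeMonoid.ofList (v ++ w)) = 0 := by
      by_contra hz
      have := (key2 _ hz).2
      rw [FreeMonoid.toList_ofList] at this
      exact irrefl _ this
    have hfg1 : (f * g).coeff (FreeMonoid.ofList (v ++ w)) = 1 := by
      rw [MonoidAlgebra.coeff_mul]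
      have hvmem : FreeMonoid.ofList v ∈ f.coeff.support :=
        Finsupp.mem_support_iff.mpr (by rw [hf1]; exact one_ne_zero)
      have hwmem : FreeMonoid.ofList w ∈ g.coeff.support :=
        Finsupp.mem_support_iff.mpr (by rw [hg1]; exact one_ne_zero)
      show (∑ a₁ ∈ f.coeff.support, ∑ a₂ ∈ g.coeff.support,
        if a₁ * a₂ = FreeMonoid.ofList (v ++ w) then f.coeff a₁ * g.coeff a₂ else 0) = 1
      rw [Finset.sum_eq_single_of_mem (FreeMonoid.ofList v) hvmem ?_]
      · rw [Finset.sum_eq_single_of_mem (FreeMonoid.ofList w) hwmem ?_]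
        · have hcond : FreeMonoid.ofList v * FreeMonoid.ofList w = FreeMonoid.ofList (v ++ w) := by
            apply FreeMonoid.toList.injective
            rw [FreeMonoid.toList_mul]
            simp
          rw [if_pos hcond, hf1, hg1, one_mul]
        · intro b hb hbne
          rw [if_neg]
          intro hcond
          apply hbne
          apply FreeMonoid.toList.injective
          have := congrArg FreeMonoid.toList hcond
          rw [FreeMonoid.toList_mul, FreeMonoid.toList_ofList, FreeMonoid.toList_ofList] at this
          exact List.append_cancel_left this
      · intro a ha hane
        apply Finset.sum_eq_zero
        intro b hb
        rw [if_neg]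
        intro hcond
        apply hane
        have := congrArg FreeMonoid.toList hcond
        rw [FreeMonoid.toList_mul, FreeMonoid.toList_ofList] at this
        have hal := (hfS a (Finsupp.mem_support_iff.mp ha)).1
        have := (List.append_inj this hal).1
        apply FreeMonoid.toList.injective
        rw [this, FreeMonoid.toList_ofList]
    constructor
    · rw [MonoidAlgebra.coeff_sub, Finsupp.sub_apply, hgf0, hfg1, sub_zero]
    · intro z hz
      rw [MonoidAlgebra.coeff_sub, Finsupp.sub_apply] at hz
      rcases eq_or_ne ((f * g).coeff z) 0 with h1 | h1
      · rcases eq_or_ne ((g * f).coeff z) 0 with h2 | h2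
        · exact absurd (by rw [h1, h2, sub_zero]) hz
        · obtain ⟨hl, hc⟩ := key2 z h2
          exact ⟨hl, Or.inr hc⟩
      · exact key1 z h1
end LexGT

namespace LexGT
variable {X : Type*} [LinearOrder X]

/-- deg-lex (non-strict) comparison -/
def DLLE (a b : List X) : Prop :=
  a.length < b.length ∨ (a.length = b.length ∧ (a = b ∨ lexGT b a))

lemma dlle_total (a b : List X) : DLLE a b ∨ DLLE b a := by
  rcases lt_trichotomy a.length b.length with h | h | h
  · exact Or.inl (Or.inl h)
  · rcases total a b with rfl | h' | h'
    · exact Or.inl (Or.inr ⟨h, Or.inl rfl⟩)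
    · exact Or.inr (Or.inr ⟨h.symm, Or.inr h'⟩)
    · exact Or.inl (Or.inr ⟨h, Or.inr h'⟩)
  · exact Or.inr (Or.inl h)

lemma dlle_trans {a b c : List X} (h1 : DLLE a b) (h2 : DLLE b c) : DLLE a c := by
  rcases h1 with h1 | ⟨h1, h1'⟩
  · rcases h2 with h2 | ⟨h2, -⟩
    · exact Or.inl (h1.trans h2)
    · exact Or.inl (h2 ▸ h1)
  · rcases h2 with h2 | ⟨h2, h2'⟩
    · exact Or.inl (h1 ▸ h2)
    · refine Or.inr ⟨h1.trans h2, ?_⟩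
      rcases h1' with rfl | h1'
      · exact h2'
      · rcases h2' with rfl | h2'
        · exact Or.inr h1'
        · exact Or.inr (trans _ _ _ h2' h1')

lemma exists_max_by {ι : Type*} (val : ι → List X) :
    ∀ l : List ι, l ≠ [] → ∃ m ∈ l, ∀ z ∈ l, DLLE (val z) (val m)
  | [], h => absurd rfl h
  | [a], _ => ⟨a, by simp, by
      intro z hz
      simp only [List.mem_singleton] at hz
      subst hz
      rcases dlle_total (val z) (val z) with h | h <;> exact h⟩
  | a :: b :: t, _ => by
    obtain ⟨m, hm, hmax⟩ := exists_max_by val (b :: t) (by simp)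
    rcases dlle_total (val a) (val m) with h | h
    · refine ⟨m, by simp [hm], ?_⟩
      intro z hz
      rcases List.mem_cons.mp hz with rfl | hz
      · exact h
      · exact hmax z hz
    · refine ⟨a, by simp, ?_⟩
      intro z hz
      rcases List.mem_cons.mp hz with rfl | hz
      · rcases dlle_total (val z) (val z) with h' | h' <;> exact h'
      · exact dlle_trans (hmax z hz) h

end LexGT


end Aux

/-- the nonassociative Lyndon-Shirshov words (Shirshov standard
bracketings of associative Lyndon-Shirshov words) are linearly independent in
the free associative algebra. -/
theorem nlsw_linear_independent
    (k : Type*) [Field k] (X : Type*) [LinearOrder X] [WellFoundedLT X]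
    (b : List X → MonoidAlgebra k (FreeMonoid X))
    (hb : ∀ u : List X, ALSW u → SB k X u (b u)) :
    LinearIndependent k (fun u : {u : List X // ALSW u} => b u.1) := by
  classical
  rw [linearIndependent_iff']
  intro s g hsum i hi
  by_contra hgi
  set T := s.filter (fun j => g j ≠ 0) with hT
  have hiT : i ∈ T := Finset.mem_filter.mpr ⟨hi, hgi⟩
  have hTl : T.toList ≠ [] := by
    intro h
    have : T = ∅ := Finset.toList_eq_nil.mp h
    rw [this] at hiT
    exact absurd hiT (Finset.notMem_empty i)
  obtain ⟨m, hmT, hmax⟩ := LexGT.exists_max_by (fun j : {u : List X // ALSW u} => j.1)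
    T.toList hTl
  rw [Finset.mem_toList] at hmT
  have hmS : m ∈ s := (Finset.mem_filter.mp hmT).1
  have hgm : g m ≠ 0 := (Finset.mem_filter.mp hmT).2
  -- evaluate the sum at the leading word of m
  have heval := congrArg (fun F : MonoidAlgebra k (FreeMonoid X) =>
    F.coeff (FreeMonoid.ofList m.1)) hsum
  simp only [MonoidAlgebra.coeff_zero, Finsupp.coe_zero, Pi.zero_apply] at heval
  rw [MonoidAlgebra.coeff_sum, Finsupp.finset_sum_apply] at heval
  have hsum2 : ∑ j ∈ s, (g j • b j.1).coeff (FreeMonoid.ofList m.1) = g m := by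
    rw [Finset.sum_eq_single_of_mem m hmS]
    · obtain ⟨h1, -⟩ := LexGT.sb_inv (hb m.1 m.2) m.2
      rw [MonoidAlgebra.coeff_smul_apply, h1, smul_eq_mul, mul_one]
    · intro j hjs hjm
      rw [MonoidAlgebra.coeff_smul_apply, smul_eq_mul]
      rcases eq_or_ne (g j) 0 with h0 | h0
      · rw [h0, zero_mul]
      · have hjT : j ∈ T := Finset.mem_filter.mpr ⟨hjs, h0⟩
        rcases eq_or_ne ((b j.1).coeff (FreeMonoid.ofList m.1)) 0 with hz | hz
        · rw [hz, mul_zero]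
        · exfalso
          obtain ⟨-, hS⟩ := LexGT.sb_inv (hb j.1 j.2) j.2
          obtain ⟨hlen, hcmp⟩ := hS _ hz
          rw [FreeMonoid.toList_ofList] at hlen hcmp
          have hdl := hmax j (Finset.mem_toList.mpr hjT)
          rcases hcmp with hceq | hc
          · exact hjm (Subtype.ext hceq.symm)
          · rcases hdl with hdl | ⟨-, hdl⟩
            · omega
            · rcases hdl with hdl | hdl
              · exact hjm (Subtype.ext hdl)
              · exact LexGT.asymm _ _ hc hdl
  rw [hsum2] at heval
  exact hgm heval
end

section
/- Let R be a λ-differential associative algebra with λ ≠ 0 and suppose u₁, ..., uₙ are elements forming a word u = u₁⋯uₙ in a free λ-differential algebra on a set X (each uᵢ prime). Then with respect to the deg-lex order, the leading term of Dⁱ(u) is Dⁱ(u₁)Dⁱ(u₂)⋯Dⁱ(uₙ) and its leading coefficient is λ^{(n−1)i}. -/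
/-- The free λ-differential associative algebra on `X`: prime differential
words `Dᵐ(x)` are encoded as pairs `(m, x) : ℕ × X`, differential words are
words on the primes, and the algebra is the monoid algebra on these words. -/
abbrev DA (k : Type*) [Field k] (X : Type*) : Type _ :=
  MonoidAlgebra k (FreeMonoid (ℕ × X))

/-- The value of the differential operator on a basis word, defined via
`D(ab) = D(a)b + aD(b) + λ D(a)D(b)` and `D(Dᵐ(x)) = Dᵐ⁺¹(x)`. -/
noncomputable def Dword (k : Type*) [Field k] {X : Type*} (lam : k) :
    List (ℕ × X) → DA k X
  | [] => 0
  | (m, x) :: rest =>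
      MonoidAlgebra.single (FreeMonoid.ofList [(m + 1, x)]) 1 *
          MonoidAlgebra.single (FreeMonoid.ofList rest) 1
        + MonoidAlgebra.single (FreeMonoid.ofList [(m, x)]) 1 * Dword k lam rest
        + lam • (MonoidAlgebra.single (FreeMonoid.ofList [(m + 1, x)]) 1 *
            Dword k lam rest)

/-- The differential operator of weight λ on the free differential algebra,
extended linearly from its values on basis words. -/
noncomputable def Dop (k : Type*) [Field k] {X : Type*} (lam : k) :
    DA k X →ₗ[k] DA k X :=
  Finsupp.linearCombination k (fun w : FreeMonoid (ℕ × X) =>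
    Dword k lam (FreeMonoid.toList w)) ∘ₗ
    (MonoidAlgebra.coeffLinearEquiv k).toLinearMap

/-- Degree of a differential word: total number of occurrences of generators
and of `D`. -/
def degDW {X : Type*} (u : List (ℕ × X)) : ℕ := (u.map fun p => p.1 + 1).sum

/-- The deg-lex order on differential words: compare degree, then breadth
(length), then the prime factors lexicographically (primes `Dᵐ(x)` being
compared by degree and then by generator). -/
def ltDl {X : Type*} [LinearOrder X] (u v : List (ℕ × X)) : Prop :=
  degDW u < degDW v ∨ (degDW u = degDW v ∧
    (u.length < v.length ∨ (u.length = v.length ∧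
      List.Lex (Prod.Lex (· < ·) (· < ·)) u v)))


def shiftW {X : Type*} (u : List (ℕ × X)) : List (ℕ × X) := u.map fun p => (p.1 + 1, p.2)

lemma degDW_cons {X : Type*} (a : ℕ × X) (rest : List (ℕ × X)) :
    degDW (a :: rest) = a.1 + 1 + degDW rest := by
  simp [degDW]

lemma degDW_shiftW {X : Type*} (u : List (ℕ × X)) :
    degDW (shiftW u) = degDW u + u.length := by
  induction u with
  | nil => simp [degDW, shiftW]
  | cons a rest ih =>
    simp only [shiftW, List.map_cons] at ih ⊢
    rw [degDW_cons, degDW_cons, ih, List.length_cons]; omega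

lemma length_shiftW {X : Type*} (u : List (ℕ × X)) : (shiftW u).length = u.length := by
  simp [shiftW]

lemma singleK_mul {k : Type*} [Field k] {X : Type*} (a b : List (ℕ × X)) :
    (MonoidAlgebra.single (FreeMonoid.ofList a) 1 : DA k X) *
      MonoidAlgebra.single (FreeMonoid.ofList b) 1 =
    MonoidAlgebra.single (FreeMonoid.ofList (a ++ b)) 1 := by
  rw [MonoidAlgebra.single_mul_single, one_mul, FreeMonoid.ofList_append]

lemma mem_support_single_mul {k : Type*} [Field k] {X : Type*}
    {a : List (ℕ × X)} {f : DA k X} {m : FreeMonoid (ℕ × X)}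
    (hm : m ∈ (MonoidAlgebra.single (FreeMonoid.ofList a) (1:k) * f).coeff.support) :
    ∃ w ∈ f.coeff.support, FreeMonoid.toList m = a ++ FreeMonoid.toList w := by
  classical
  have h := MonoidAlgebra.support_coeff_mul_subset (MonoidAlgebra.single (FreeMonoid.ofList a) (1:k)) f hm
  rw [Finset.mem_mul] at h
  obtain ⟨x, hx, y, hy, hxy⟩ := h
  have hx' : x = FreeMonoid.ofList a := Finset.mem_singleton.1 (by
    simpa using Finsupp.support_single_subset hx)
  refine ⟨y, hy, ?_⟩
  subst hxy hx'
  rfl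

/-- Key structural lemma on `Dword`. -/
lemma Dword_eq (k : Type*) [Field k] {X : Type*} (lam : k) :
    ∀ u : List (ℕ × X), u ≠ [] →
    ∃ r : DA k X,
      Dword k lam u = lam ^ (u.length - 1) •
          MonoidAlgebra.single (FreeMonoid.ofList (shiftW u)) 1 + r ∧
      ∀ m ∈ r.coeff.support, (FreeMonoid.toList m).length = u.length ∧
        degDW (FreeMonoid.toList m) < degDW u + u.length := by
  intro u hu
  induction u with
  | nil => exact absurd rfl hu
  | cons a rest ih =>
    obtain ⟨m, x⟩ := a
    by_cases hrest : rest = []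
    · subst hrest
      refine ⟨0, ?_, by simp⟩
      show Dword k lam [(m, x)] = _
      rw [Dword]
      simp [Dword, shiftW, singleK_mul]
    · obtain ⟨r, hr, hrs⟩ := ih hrest
      set n := rest.length with hn
      have hn1 : 1 ≤ n := by
        cases rest with
        | nil => exact absurd rfl hrest
        | cons b l => simp [hn]
      refine ⟨MonoidAlgebra.single (FreeMonoid.ofList [(m + 1, x)]) 1 *
            MonoidAlgebra.single (FreeMonoid.ofList rest) 1
          + lam ^ (n - 1) • (MonoidAlgebra.single (FreeMonoid.ofList [(m, x)]) 1 *
              MonoidAlgebra.single (FreeMonoid.ofList (shiftW rest)) 1)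
          + MonoidAlgebra.single (FreeMonoid.ofList [(m, x)]) 1 * r
          + lam • (MonoidAlgebra.single (FreeMonoid.ofList [(m + 1, x)]) 1 * r), ?_, ?_⟩
      · show Dword k lam ((m, x) :: rest) = _
        rw [Dword, hr]
        have hl : ((m, x) :: rest).length - 1 = n := by
          show rest.length + 1 - 1 = n
          omega
        rw [hl]
        have hsh : shiftW ((m, x) :: rest) = (m + 1, x) :: shiftW rest := rfl
        rw [hsh]
        rw [mul_add, mul_add, smul_add, mul_smul_comm, mul_smul_comm]
        simp only [singleK_mul, List.singleton_append]
        have : lam • lam ^ (n - 1) • (MonoidAlgebra.single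
            (FreeMonoid.ofList ((m+1,x) :: shiftW rest)) 1 : DA k X)
            = lam ^ n • MonoidAlgebra.single (FreeMonoid.ofList ((m+1,x) :: shiftW rest)) 1 := by
          rw [smul_smul, ← pow_succ', Nat.sub_add_cancel hn1]
        rw [this]
        module
      · intro w hw
        classical
        simp only [MonoidAlgebra.coeff_add] at hw
        have h1 := Finsupp.support_add (g₁ := _) (g₂ := (lam • (MonoidAlgebra.single (FreeMonoid.ofList [(m + 1, x)]) 1 * r) : DA k X).coeff) hw
        rw [Finset.mem_union] at h1
        have hkey : (FreeMonoid.toList w).length = n + 1 ∧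
            degDW (FreeMonoid.toList w) < degDW ((m,x)::rest) + (n+1) := by
          rcases h1 with h1 | h1
          · have h2 := Finsupp.support_add (g₁ := _) (g₂ := (MonoidAlgebra.single (FreeMonoid.ofList [(m, x)]) 1 * r : DA k X).coeff) h1
            rw [Finset.mem_union] at h2
            rcases h2 with h2 | h2
            · have h3 := Finsupp.support_add (g₁ := _) (g₂ := (lam ^ (n-1) • (MonoidAlgebra.single (FreeMonoid.ofList [(m, x)]) 1 *
              MonoidAlgebra.single (FreeMonoid.ofList (shiftW rest)) 1) : DA k X).coeff) h2
              rw [Finset.mem_union] at h3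
              rcases h3 with h3 | h3
              · -- w = (m+1,x) :: rest
                rw [singleK_mul] at h3
                have : w = FreeMonoid.ofList ((m+1,x) :: rest) := by
                  simpa using Finsupp.support_single_subset h3
                subst this
                constructor
                · simp [FreeMonoid.toList_ofList, hn]
                · rw [FreeMonoid.toList_ofList, degDW_cons, degDW_cons]
                  omega
              · have h3' := Finsupp.support_smul h3
                rw [singleK_mul] at h3'
                have : w = FreeMonoid.ofList ((m,x) :: shiftW rest) := by
                  simpa using Finsupp.support_single_subset h3'
                subst this
                constructor
                · simp [FreeMonoid.toList_ofList, length_shiftW, hn]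
                · rw [FreeMonoid.toList_ofList, degDW_cons, degDW_cons, degDW_shiftW]
                  omega
            · obtain ⟨v, hv, hvw⟩ := mem_support_single_mul h2
              obtain ⟨hv1, hv2⟩ := hrs v hv
              constructor
              · rw [hvw]; simp [hv1]
              · rw [hvw]
                show degDW ((m,x) :: FreeMonoid.toList v) < _
                rw [degDW_cons, degDW_cons]
                omega
          · have h1' := Finsupp.support_smul h1
            obtain ⟨v, hv, hvw⟩ := mem_support_single_mul h1'
            obtain ⟨hv1, hv2⟩ := hrs v hv
            constructor
            · rw [hvw]; simp [hv1]
            · rw [hvw]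
              show degDW ((m+1,x) :: FreeMonoid.toList v) < _
              rw [degDW_cons, degDW_cons]
              omega
        simpa [hn] using hkey

lemma Dword_support (k : Type*) [Field k] {X : Type*} (lam : k)
    (u : List (ℕ × X)) (hu : u ≠ []) :
    ∀ m ∈ (Dword k lam u).coeff.support, (FreeMonoid.toList m).length = u.length ∧
      degDW (FreeMonoid.toList m) ≤ degDW u + u.length ∧
      (degDW (FreeMonoid.toList m) = degDW u + u.length →
        FreeMonoid.toList m = shiftW u) := by
  classical
  obtain ⟨r, hr, hrs⟩ := Dword_eq k lam u hu
  intro m hm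
  rw [hr] at hm
  have h1 := Finsupp.support_add (g₁ := _) (g₂ := r.coeff) hm
  rw [Finset.mem_union] at h1
  rcases h1 with h1 | h1
  · have h2 := Finsupp.support_smul h1
    have : m = FreeMonoid.ofList (shiftW u) := by
      simpa using Finsupp.support_single_subset h2
    subst this
    refine ⟨by simp [FreeMonoid.toList_ofList, length_shiftW], ?_, fun _ => rfl⟩
    rw [FreeMonoid.toList_ofList, degDW_shiftW]
  · obtain ⟨h2, h3⟩ := hrs m h1
    exact ⟨h2, le_of_lt h3, fun h => absurd h (by omega)⟩

lemma lex_shiftW {X : Type*} [LinearOrder X] {u v : List (ℕ × X)}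
    (h : List.Lex (Prod.Lex (· < ·) (· < ·)) u v) :
    List.Lex (Prod.Lex (· < ·) (· < ·)) (shiftW u) (shiftW v) := by
  induction h with
  | nil => exact List.Lex.nil
  | @cons a l₁ l₂ _ ih => exact List.Lex.cons ih
  | @rel a l₁ b l₂ hab =>
    refine List.Lex.rel ?_
    rw [Prod.lex_def] at hab ⊢
    rcases hab with h | ⟨h1, h2⟩
    · exact Or.inl (by simpa using Nat.add_lt_add_right h 1)
    · exact Or.inr ⟨by simp [h1], h2⟩

lemma Dop_single (k : Type*) [Field k] {X : Type*} (lam : k) (w : FreeMonoid (ℕ × X)) :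
    Dop k lam (MonoidAlgebra.single w (1:k)) = Dword k lam (FreeMonoid.toList w) := by
  rw [Dop]
  show Finsupp.linearCombination k _ (Finsupp.single w 1) = _
  erw [Finsupp.linearCombination_single]
  rw [one_smul]

lemma Dop_apply (k : Type*) [Field k] {X : Type*} (lam : k) (f : DA k X) :
    Dop k lam f = f.coeff.sum fun w c => c • Dword k lam (FreeMonoid.toList w) :=
  Finsupp.linearCombination_apply _ _

lemma shiftI_succ {X : Type*} (u : List (ℕ × X)) (i : ℕ) :
    (u.map fun p => (p.1 + (i + 1), p.2)) = shiftW (u.map fun p => (p.1 + i, p.2)) := by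
  simp only [shiftW, List.map_map]
  exact List.map_congr_left (fun p _ => by simp [Function.comp]; omega)

lemma degDW_shiftI {X : Type*} (u : List (ℕ × X)) (i : ℕ) :
    degDW (u.map fun p => (p.1 + i, p.2)) = degDW u + i * u.length := by
  induction i with
  | zero => simp
  | succ i ih =>
    rw [shiftI_succ, degDW_shiftW, ih, List.length_map]
    ring

theorem main_aux (k : Type*) [Field k] (X : Type*) [LinearOrder X]
    (lam : k) (u : List (ℕ × X)) (hu : u ≠ []) (i : ℕ) :
    ∃ r : DA k X,
      (Dop k lam ^ i) (MonoidAlgebra.single (FreeMonoid.ofList u) 1) =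
          lam ^ ((u.length - 1) * i) •
            MonoidAlgebra.single
              (FreeMonoid.ofList (u.map fun p => (p.1 + i, p.2))) 1 + r ∧
      ∀ m ∈ r.coeff.support, (FreeMonoid.toList m).length = u.length ∧
        ltDl (FreeMonoid.toList m) (u.map fun p => (p.1 + i, p.2)) := by
  classical
  set n := u.length with hn
  have hn1 : 1 ≤ n := by
    cases u with
    | nil => exact absurd rfl hu
    | cons a l => simp [hn]
  induction i with
  | zero =>
    refine ⟨0, ?_, by simp⟩
    have h0 : (u.map fun p => (p.1 + 0, p.2)) = u := by simp
    simp [h0]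
  | succ i ih =>
    obtain ⟨r, hr, hrs⟩ := ih
    set v := u.map fun p => (p.1 + i, p.2) with hv
    have hvlen : v.length = n := by simp [hv, hn]
    have hvne : v ≠ [] := by
      intro h
      rw [h] at hvlen
      simp at hvlen
      omega
    obtain ⟨r₁, hr1, hr1s⟩ := Dword_eq k lam v hvne
    rw [hvlen] at hr1 hr1s
    have hdegv : degDW (shiftW v) = degDW v + n := by rw [degDW_shiftW, hvlen]
    have hpow : (Dop k lam ^ (i + 1)) (MonoidAlgebra.single (FreeMonoid.ofList u) 1)
        = Dop k lam ((Dop k lam ^ i) (MonoidAlgebra.single (FreeMonoid.ofList u) 1)) := by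
      rw [pow_succ']
      rfl
    refine ⟨lam ^ ((n - 1) * i) • r₁ + Dop k lam r, ?_, ?_⟩
    · have hexp : (n - 1) * (i + 1) = (n - 1) * i + (n - 1) := Nat.mul_succ _ _
      rw [hpow, hr, map_add, map_smul, Dop_single, FreeMonoid.toList_ofList, hr1,
        shiftI_succ, ← hv, smul_add, smul_smul, ← pow_add, hexp]
      module
    · intro m hm
      rw [shiftI_succ, ← hv]
      have h1 := Finsupp.support_add (g₁ := _) (g₂ := (Dop k lam r).coeff) hm
      rw [Finset.mem_union] at h1
      rcases h1 with h1 | h1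
      · obtain ⟨hl, hd⟩ := hr1s m (Finsupp.support_smul h1)
        exact ⟨hl, Or.inl (by omega)⟩
      · rw [Dop_apply, MonoidAlgebra.coeff_finsuppSum] at h1
        have h2 := Finsupp.support_sum h1
        rw [Finset.mem_biUnion] at h2
        obtain ⟨w, hw, hmw⟩ := h2
        have hmw' := Finsupp.support_smul hmw
        obtain ⟨hwl, hwlt⟩ := hrs w hw
        have hwne : FreeMonoid.toList w ≠ [] := by
          intro h
          rw [h] at hwl
          simp at hwl
          omega
        obtain ⟨hml, hmd, hmeq⟩ := Dword_support k lam (FreeMonoid.toList w) hwne m hmw'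
        rw [hwl] at hml hmd hmeq
        refine ⟨hml, ?_⟩
        rcases hwlt with hlt | ⟨hde, hrest⟩
        · exact Or.inl (by omega)
        · rcases lt_or_eq_of_le hmd with hlt' | heq'
          · exact Or.inl (by omega)
          · have hms := hmeq heq'
            rcases hrest with hlen | ⟨hlen, hlex⟩
            · omega
            · refine Or.inr ⟨by rw [hms, degDW_shiftW, hwl]; omega, Or.inr ⟨?_, ?_⟩⟩
              · rw [hms, length_shiftW, length_shiftW, hwl, hvlen]
              · rw [hms]
                exact lex_shiftW hlex

/-- for λ ≠ 0, the leading term of `Dⁱ(u₁⋯uₙ)` is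
`Dⁱ(u₁)Dⁱ(u₂)⋯Dⁱ(uₙ)` with leading coefficient `λ^{(n−1)i}`. -/
theorem leading_term_D_pow_ne_zero
    (k : Type*) [Field k] (X : Type*) [LinearOrder X]
    (lam : k) (hlam : lam ≠ 0) (u : List (ℕ × X)) (hu : u ≠ []) (i : ℕ) :
    ∃ r : DA k X,
      (Dop k lam ^ i) (MonoidAlgebra.single (FreeMonoid.ofList u) 1) =
          lam ^ ((u.length - 1) * i) •
            MonoidAlgebra.single
              (FreeMonoid.ofList (u.map fun p => (p.1 + i, p.2))) 1 + r ∧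
      ∀ m ∈ r.coeff.support,
        ltDl (FreeMonoid.toList m) (u.map fun p => (p.1 + i, p.2)) := by
  obtain ⟨r, h1, h2⟩ := main_aux k X lam u hu i
  exact ⟨r, h1, fun m hm => (h2 m hm).2⟩
end
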